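/- Let Z be a real random variable such that for all t > 0, P(Z ≥ E[Z] + t) ≤ exp(-t²/(2(aE[Z] + b + at))) and P(Z ≤ E[Z] - t) ≤ exp(-t²/(2(aE[Z] + b + t/3))) with a > 1/3 and b ≥ 0. Then for any δ ∈ (0,1), with probability at least 1 - δ: |Z - E[Z]| ≤ a·ln(2/δ) + sqrt(2·ln(2/δ)·(aE[Z] + b) + a²·(ln(2/δ))²). -/

import Mathlib

/-!
Take the deviation `t = a L + √(2 L c + a² L²)` with `L = log (2/δ)` and `c = a m + b`: it is
the positive root of `t² = 2 L (c + a t)`, so the upper tail bound at `t` is exactly `e^{-L} = δ/2`.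
Since `a ≥ 1/3`, the lower tail has the smaller denominator `c + t/3 ≤ c + a t`, hence is also at
most `δ/2`, and a union bound finishes.
-/

open MeasureTheory Real

section Tails

variable {Ω : Type*} [MeasurableSpace Ω] {μ : Measure Ω} [IsProbabilityMeasure μ]

lemma one_sub_le_toReal_measure_of_compl_subset_union {s u v : Set Ω} (h : sᶜ ⊆ u ∪ v) :
    1 - ((μ u).toReal + (μ v).toReal) ≤ (μ s).toReal := by
  simp only [← measureReal_def]
  have hcover : Set.univ ⊆ s ∪ (u ∪ v) := fun ω _ => (em (ω ∈ s)).imp id (@h ω)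
  have := calc
    1 = μ.real Set.univ := probReal_univ.symm
    _ ≤ μ.real (s ∪ (u ∪ v)) := measureReal_mono hcover
    _ ≤ μ.real s + μ.real (u ∪ v) := measureReal_union_le _ _
    _ ≤ μ.real s + (μ.real u + μ.real v) := by gcongr; exact measureReal_union_le _ _
  linarith

lemma one_sub_add_le_toReal_measure_abs_sub_le_of_tails {Z : Ω → ℝ} {m t ε₁ ε₂ : ℝ}
    (hup : (μ {ω | m + t ≤ Z ω}).toReal ≤ ε₁) (hdown : (μ {ω | Z ω ≤ m - t}).toReal ≤ ε₂) :
    1 - (ε₁ + ε₂) ≤ (μ {ω | |Z ω - m| ≤ t}).toReal := by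
  have hcompl : {ω | |Z ω - m| ≤ t}ᶜ ⊆ {ω | m + t ≤ Z ω} ∪ {ω | Z ω ≤ m - t} := by
    intro ω hω
    have hdev : t < |Z ω - m| := not_le.mp hω
    rcases lt_abs.mp hdev with h | h
    · exact Or.inl (show m + t ≤ Z ω by linarith)
    · exact Or.inr (show Z ω ≤ m - t by linarith)
  linarith [one_sub_le_toReal_measure_of_compl_subset_union (μ := μ) hcompl]

end Tails

section Deviation

noncomputable def bernsteinDeviation (a c L : ℝ) : ℝ := a * L + √(2 * L * c + a ^ 2 * L ^ 2)

variable {a c L : ℝ}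

lemma bernsteinDeviation_pos (ha : 0 < a) (hL : 0 < L) : 0 < bernsteinDeviation a c L :=
  add_pos_of_pos_of_nonneg (mul_pos ha hL) (sqrt_nonneg _)

lemma bernsteinDeviation_sq (hc : 0 ≤ c) (hL : 0 ≤ L) :
    bernsteinDeviation a c L ^ 2 = 2 * L * (c + a * bernsteinDeviation a c L) := by
  have hrad : 0 ≤ 2 * L * c + a ^ 2 * L ^ 2 := by positivity
  have hs := sq_sqrt hrad
  unfold bernsteinDeviation
  linear_combination hs

lemma neg_sq_div_bernsteinDeviation (ha : 0 < a) (hc : 0 ≤ c) (hL : 0 < L) :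
    -(bernsteinDeviation a c L ^ 2) / (2 * (c + a * bernsteinDeviation a c L)) = -L := by
  have ht := bernsteinDeviation_pos (c := c) ha hL
  rw [bernsteinDeviation_sq hc hL.le]
  field_simp

lemma neg_sq_div_bernsteinDeviation_third_le (ha : 1 / 3 ≤ a) (hc : 0 ≤ c) (hL : 0 < L) :
    -(bernsteinDeviation a c L ^ 2) / (2 * (c + bernsteinDeviation a c L / 3)) ≤ -L := by
  have ha0 : 0 < a := lt_of_lt_of_le (by norm_num) ha
  have ht := bernsteinDeviation_pos (c := c) ha0 hL
  rw [← neg_sq_div_bernsteinDeviation ha0 hc hL, neg_div, neg_div, neg_le_neg_iff]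
  gcongr
  linarith [mul_le_mul_of_nonneg_right ha ht.le]

end Deviation

theorem stmt_4_general
    {Ω : Type*} [MeasurableSpace Ω] (μ : Measure Ω) [IsProbabilityMeasure μ]
    (Z : Ω → ℝ)
    (a b : ℝ) (ha : 1 / 3 < a) (hb : 0 ≤ b)
    (m : ℝ) (hm0 : 0 ≤ m)
    (hup : ∀ t > 0, (μ {ω | m + t ≤ Z ω}).toReal ≤ exp (-(t ^ 2) / (2 * (a * m + b + a * t))))
    (hdown : ∀ t > 0, (μ {ω | Z ω ≤ m - t}).toReal ≤ exp (-(t ^ 2) / (2 * (a * m + b + t / 3))))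
    (δ : ℝ) (hδ0 : 0 < δ) (hδ1 : δ < 1) :
    (1 : ℝ) - δ ≤
      (μ {ω | |Z ω - m| ≤
        a * Real.log (2 / δ)
          + Real.sqrt (2 * Real.log (2 / δ) * (a * m + b)
              + a ^ 2 * (Real.log (2 / δ)) ^ 2)}).toReal := by
  have ha0 : 0 < a := lt_trans (by norm_num) ha
  have hc : 0 ≤ a * m + b := by positivity
  have hL : 0 < log (2 / δ) := log_pos (by rw [lt_div_iff₀ hδ0]; linarith)
  have hexp : exp (-log (2 / δ)) = δ / 2 := by
    rw [exp_neg, exp_log (by positivity), inv_div]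
  set t := bernsteinDeviation a (a * m + b) (log (2 / δ))
  have ht : 0 < t := bernsteinDeviation_pos ha0 hL
  have hup' : (μ {ω | m + t ≤ Z ω}).toReal ≤ δ / 2 := by
    have := neg_sq_div_bernsteinDeviation ha0 hc hL
    rw [← hexp, ← this]
    exact hup t ht
  have hdown' : (μ {ω | Z ω ≤ m - t}).toReal ≤ δ / 2 := by
    have := neg_sq_div_bernsteinDeviation_third_le ha.le hc hL
    rw [← hexp]
    exact (hdown t ht).trans (exp_le_exp.mpr this)
  have := one_sub_add_le_toReal_measure_abs_sub_le_of_tails hup' hdown'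
  rwa [add_halves] at this

/-- A Bernstein-type two-sided tail bound implies the high-probability deviation
bound of Corollary 1. -/
theorem stmt_4
    {Ω : Type*} [MeasurableSpace Ω] (μ : Measure Ω) [IsProbabilityMeasure μ]
    (Z : Ω → ℝ) (hZmeas : Measurable Z) (hZint : Integrable Z μ)
    (a b : ℝ) (ha : 1 / 3 < a) (hb : 0 ≤ b)
    (m : ℝ) (hm : m = ∫ ω, Z ω ∂μ) (hm0 : 0 ≤ m)
    (hup : ∀ t > 0, (μ {ω | m + t ≤ Z ω}).toReal ≤ exp (-(t ^ 2) / (2 * (a * m + b + a * t))))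
    (hdown : ∀ t > 0, (μ {ω | Z ω ≤ m - t}).toReal ≤ exp (-(t ^ 2) / (2 * (a * m + b + t / 3))))
    (δ : ℝ) (hδ0 : 0 < δ) (hδ1 : δ < 1) :
    (1 : ℝ) - δ ≤
      (μ {ω | |Z ω - m| ≤
        a * Real.log (2 / δ)
          + Real.sqrt (2 * Real.log (2 / δ) * (a * m + b)
              + a ^ 2 * (Real.log (2 / δ)) ^ 2)}).toReal :=
  stmt_4_general μ Z a b ha hb m hm0 hup hdown δ hδ0 hδ1
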